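/- arXiv:1711.09178 — 2 statements merged into one kernel-verified Lean document; each statement's English description precedes it below -/
import Mathlib

section
/- Let I be a squarefree monomial ideal with Stanley-Reisner complex Δ having facets F_1,...,F_m, and let s ≥ 1. For α ∈ ℕ^n, the degree complex Δ_α(I^{(s)}) of the s-th symbolic power is generated by those facets F of Δ such that the sum of α_i over i ∉ F is at most s−1. -/
open MvPolynomial

lemma prod_pow_mem_pow {R ι : Type*} [CommRing R] (I : Ideal R) (T : Finset ι)
    (f : ι → R) (hf : ∀ i ∈ T, f i ∈ I) (e : ι → ℕ) :
    ∏ i ∈ T, f i ^ e i ∈ I ^ (∑ i ∈ T, e i) := by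
  classical
  induction T using Finset.induction with
  | empty => simp [Ideal.one_eq_top]
  | @insert a T' h ih =>
    rw [Finset.prod_insert h, Finset.sum_insert h, pow_add]
    exact Ideal.mul_mem_mul (Ideal.pow_mem_pow (hf a (Finset.mem_insert_self a T')) _)
      (ih fun i hi => hf i (Finset.mem_insert_of_mem hi))

lemma monomial_mem_pow_iff {n : ℕ} {K : Type*} [Field K] (F : Finset (Fin n))
    (s : ℕ) (β : Fin n → ℕ) :
    (∏ i, X i ^ β i) ∈
      (Ideal.span {p : MvPolynomial (Fin n) K | ∃ i ∉ F, p = X i}) ^ s ↔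
      s ≤ ∑ i ∈ Fᶜ, β i := by
  classical
  set P : Ideal (MvPolynomial (Fin n) K) :=
    Ideal.span {p : MvPolynomial (Fin n) K | ∃ i ∉ F, p = X i} with hP
  constructor
  · intro hmem
    set ψ : MvPolynomial (Fin n) K →ₐ[K] Polynomial K :=
      aeval (fun i => if i ∈ F then (1 : Polynomial K) else Polynomial.X) with hψ
    have hmap : Ideal.map (ψ : MvPolynomial (Fin n) K →+* Polynomial K) P ≤
        Ideal.span {Polynomial.X} := by
      rw [hP, Ideal.map_span]
      apply Ideal.span_le.2
      rintro q ⟨p, ⟨i, hi, rfl⟩, rfl⟩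
      simp only [RingHom.coe_coe, hψ, aeval_X, if_neg hi]
      exact Ideal.subset_span rfl
    have h1 : ψ (∏ i, X i ^ β i) ∈ Ideal.span {Polynomial.X} ^ s := by
      have := Ideal.mem_map_of_mem (ψ : MvPolynomial (Fin n) K →+* Polynomial K) hmem
      rw [Ideal.map_pow] at this
      exact Ideal.pow_right_mono hmap s this
    have h2 : ψ (∏ i, X i ^ β i) = Polynomial.X ^ (∑ i ∈ Fᶜ, β i) := by
      rw [map_prod]
      rw [← Finset.prod_mul_prod_compl F fun i => ψ (X i ^ β i)]
      have hF : ∏ i ∈ F, ψ (X i ^ β i) = 1 := by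
        apply Finset.prod_eq_one
        intro i hi
        simp [hψ, if_pos hi]
      rw [hF, one_mul, ← Finset.prod_pow_eq_pow_sum]
      apply Finset.prod_congr rfl
      intro i hi
      simp only [Finset.mem_compl] at hi
      simp [hψ, if_neg hi]
    rw [Ideal.span_singleton_pow, Ideal.mem_span_singleton, h2] at h1
    exact (pow_dvd_pow_iff Polynomial.X_ne_zero Polynomial.not_isUnit_X).1 h1
  · intro hle
    rw [← Finset.prod_mul_prod_compl F fun i => (X i : MvPolynomial (Fin n) K) ^ β i]
    rw [mul_comm]
    apply Ideal.mul_mem_right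
    have h1 : ∏ i ∈ Fᶜ, (X i : MvPolynomial (Fin n) K) ^ β i ∈ P ^ (∑ i ∈ Fᶜ, β i) := by
      apply prod_pow_mem_pow
      intro i hi
      exact Ideal.subset_span ⟨i, Finset.mem_compl.1 hi, rfl⟩
    exact Ideal.pow_le_pow_right hle h1

lemma prod_rewrite {n : ℕ} {K : Type*} [Field K] (σ : Finset (Fin n)) (α : Fin n → ℕ) (k : ℕ) :
    (∏ i, (X i : MvPolynomial (Fin n) K) ^ α i) * (∏ i ∈ σ, X i) ^ k =
      ∏ i, X i ^ (α i + if i ∈ σ then k else 0) := by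
  classical
  have h1 : (∏ i ∈ σ, (X i : MvPolynomial (Fin n) K)) ^ k
      = ∏ i, X i ^ (if i ∈ σ then k else 0) := by
    rw [← Finset.prod_pow]
    trans (∏ i ∈ σ, (X i : MvPolynomial (Fin n) K) ^ (if i ∈ σ then k else 0))
    · exact Finset.prod_congr rfl fun i hi => by rw [if_pos hi]
    · exact Finset.prod_subset (Finset.subset_univ σ)
        (fun i _ hi => by rw [if_neg hi, pow_zero])
  rw [h1, ← Finset.prod_mul_distrib]
  apply Finset.prod_congr rfl
  intro i _
  rw [pow_add]

/-- `x^α ∈ I·R_F`, where `R_F` is the localization of `R` inverting the variables `x_i, i ∈ F`: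
for a monomial this means some multiple of `x^α` by a power of `∏_{i∈F} x_i` lies in `I`. -/
def memLocalized {n : ℕ} {K : Type*} [Field K] (I : Ideal (MvPolynomial (Fin n) K))
    (F : Finset (Fin n)) (p : MvPolynomial (Fin n) K) : Prop :=
  ∃ k : ℕ, p * (∏ i ∈ F, X i) ^ k ∈ I

/-- The degree complex `Δ_α(I)` of a monomial ideal `I` at `α ∈ ℕⁿ` (so `G_α = ∅`):
its faces are the sets `F` with `x^α ∉ I·R_F`. -/
noncomputable def degreeComplex {n : ℕ} {K : Type*} [Field K]
    (I : Ideal (MvPolynomial (Fin n) K)) (α : Fin n → ℕ) : Set (Finset (Fin n)) :=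
  {F : Finset (Fin n) | ¬ memLocalized I F (∏ i, X i ^ α i)}

/-- For a squarefree monomial ideal `I = ⋂_{F ∈ Fs} P_F`, with `Fs` the facets of its
Stanley–Reisner complex, and `s ≥ 1`, the degree complex of the symbolic power
`I^{(s)} = ⋂_{F ∈ Fs} P_F^s` at `α ∈ ℕⁿ` is generated by the facets `F ∈ Fs` with
`∑_{i ∉ F} α_i ≤ s − 1`. -/
theorem degreeComplex_symbolicPower {n : ℕ} (K : Type*) [Field K]
    (Fs : Finset (Finset (Fin n)))
    (hanti : ∀ F ∈ Fs, ∀ G ∈ Fs, F ⊆ G → F = G)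
    (s : ℕ) (hs : 1 ≤ s) (α : Fin n → ℕ) :
    degreeComplex
        (⨅ F ∈ Fs, (Ideal.span {p : MvPolynomial (Fin n) K | ∃ i ∉ F, p = X i}) ^ s) α =
      {σ : Finset (Fin n) | ∃ F ∈ Fs, σ ⊆ F ∧ ∑ i ∈ Fᶜ, α i ≤ s - 1} := by
  classical
  ext σ
  simp only [degreeComplex, memLocalized, Set.mem_setOf_eq, Ideal.mem_iInf]
  simp_rw [prod_rewrite, monomial_mem_pow_iff]
  push_neg
  constructor
  · intro h
    obtain ⟨F, hF, hlt⟩ := h s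
    have hσF : σ ⊆ F := by
      by_contra hc
      obtain ⟨i, hiσ, hiF⟩ := Finset.not_subset.1 hc
      have : s ≤ ∑ i ∈ Fᶜ, (α i + if i ∈ σ then s else 0) := by
        calc s ≤ α i + (if i ∈ σ then s else 0) := by rw [if_pos hiσ]; omega
          _ ≤ ∑ j ∈ Fᶜ, (α j + if j ∈ σ then s else 0) :=
            Finset.single_le_sum (f := fun j => α j + if j ∈ σ then s else 0)
              (fun j _ => Nat.zero_le _) (Finset.mem_compl.2 hiF)
      omega
    refine ⟨F, hF, hσF, ?_⟩
    have hsum : ∑ i ∈ Fᶜ, (α i + if i ∈ σ then s else 0) = ∑ i ∈ Fᶜ, α i := by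
      apply Finset.sum_congr rfl
      intro i hi
      rw [if_neg fun h => (Finset.mem_compl.1 hi) (hσF h), add_zero]
    omega
  · rintro ⟨F, hF, hσF, hle⟩ k
    refine ⟨F, hF, ?_⟩
    have hsum : ∑ i ∈ Fᶜ, (α i + if i ∈ σ then k else 0) = ∑ i ∈ Fᶜ, α i := by
      apply Finset.sum_congr rfl
      intro i hi
      rw [if_neg fun h => (Finset.mem_compl.1 hi) (hσF h), add_zero]
    omega
end

section
/- Let H = (V,E) be a hypergraph on V = {1,...,n}, F ⊆ V, S = K[x_i : i ∉ F], and let H' be the hypergraph on V' = V \ F with edge set E' = {E ∈ E : E ∩ F = ∅}. Then J(H)·R_F ∩ S = J(H'), where R_F = R[x_i^{-1} : i ∈ F]. -/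
open MvPolynomial

variable {n : ℕ} (K : Type*) [Field K]

/-- The cover ideal `J(H) = ⋂_{e ∈ E} (x_i : i ∈ e)` in `R = K[x_1,…,x_n]`. -/
noncomputable def coverIdeal (E : Finset (Finset (Fin n))) :
    Ideal (MvPolynomial (Fin n) K) :=
  ⨅ e ∈ E, Ideal.span {p : MvPolynomial (Fin n) K | ∃ i ∈ e, p = X i}

/-- The cover ideal of the restricted hypergraph `H'` on `V \ F`, with edges the edges of
`H` disjoint from `F`, inside `S = K[x_i : i ∉ F]`. -/
noncomputable def coverIdealRestr (E : Finset (Finset (Fin n))) (F : Finset (Fin n)) :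
    Ideal (MvPolynomial {i : Fin n // i ∉ F} K) :=
  ⨅ e ∈ E.filter (fun e => ∀ i ∈ e, i ∉ F),
    Ideal.span {p : MvPolynomial {i : Fin n // i ∉ F} K |
      ∃ i : Fin n, ∃ h : i ∈ e ∧ i ∉ F, p = X ⟨i, h.2⟩}

lemma prod_X_eq_monomial_sum {σ : Type*} {R : Type*} [CommSemiring R] (F : Finset σ) :
    (∏ i ∈ F, (X i : MvPolynomial σ R)) = monomial (∑ i ∈ F, Finsupp.single i 1) 1 := by
  classical
  induction F using Finset.cons_induction with
  | empty => simp [monomial_zero']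
  | cons i s hi ih =>
      rw [Finset.prod_cons, Finset.sum_cons, ih, X, monomial_mul, one_mul]

lemma coverIdeal_mem_iff (E : Finset (Finset (Fin n))) (p : MvPolynomial (Fin n) K) :
    p ∈ coverIdeal K E ↔ ∀ e ∈ E, ∀ d ∈ p.support, ∃ i ∈ e, d i ≠ 0 := by
  unfold coverIdeal
  rw [Ideal.mem_iInf]
  refine forall_congr' fun e => ?_
  rw [Ideal.mem_iInf]
  refine forall_congr' fun _ => ?_
  have hset : {p : MvPolynomial (Fin n) K | ∃ i ∈ e, p = X i}
      = (X '' (↑e : Set (Fin n)) : Set (MvPolynomial (Fin n) K)) := by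
    ext p; simp [eq_comm]
  rw [hset, mem_ideal_span_X_image]
  simp

lemma coverIdealRestr_mem_iff (E : Finset (Finset (Fin n))) (F : Finset (Fin n))
    (q : MvPolynomial {i : Fin n // i ∉ F} K) :
    q ∈ coverIdealRestr K E F ↔ ∀ e ∈ E, (∀ i ∈ e, i ∉ F) →
      ∀ c ∈ q.support, ∃ j : {i : Fin n // i ∉ F}, ↑j ∈ e ∧ c j ≠ 0 := by
  unfold coverIdealRestr
  simp only [Ideal.mem_iInf]
  constructor
  · intro h e he hdisj c hc
    have hmem : e ∈ E.filter (fun e => ∀ i ∈ e, i ∉ F) := Finset.mem_filter.2 ⟨he, hdisj⟩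
    have hset : {p : MvPolynomial {i : Fin n // i ∉ F} K |
        ∃ i : Fin n, ∃ h : i ∈ e ∧ i ∉ F, p = X ⟨i, h.2⟩}
        = (X '' {j : {i : Fin n // i ∉ F} | ↑j ∈ e}) := by
      ext p
      constructor
      · rintro ⟨i, ⟨hi, hiF⟩, rfl⟩; exact ⟨⟨i, hiF⟩, hi, rfl⟩
      · rintro ⟨⟨i, hiF⟩, hi, rfl⟩; exact ⟨i, ⟨hi, hiF⟩, rfl⟩
    have := (mem_ideal_span_X_image.1 (hset ▸ h e hmem)) c hc
    obtain ⟨j, hj, hjne⟩ := this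
    exact ⟨j, hj, hjne⟩
  · intro h e hmem
    obtain ⟨he, hdisj⟩ := Finset.mem_filter.1 hmem
    have hset : {p : MvPolynomial {i : Fin n // i ∉ F} K |
        ∃ i : Fin n, ∃ h : i ∈ e ∧ i ∉ F, p = X ⟨i, h.2⟩}
        = (X '' {j : {i : Fin n // i ∉ F} | ↑j ∈ e}) := by
      ext p
      constructor
      · rintro ⟨i, ⟨hi, hiF⟩, rfl⟩; exact ⟨⟨i, hiF⟩, hi, rfl⟩
      · rintro ⟨⟨i, hiF⟩, hi, rfl⟩; exact ⟨i, ⟨hi, hiF⟩, rfl⟩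
    rw [hset, mem_ideal_span_X_image]
    intro c hc
    obtain ⟨j, hj, hjne⟩ := h e he hdisj c hc
    exact ⟨j, hj, hjne⟩

/-- `J(H)·R_F ∩ S = J(H')`, where `R_F` is the localization of `R` inverting the
variables `x_i` with `i ∈ F`, and `S = K[x_i : i ∉ F]` maps into `R_F`. -/
theorem coverIdeal_localization (E : Finset (Finset (Fin n))) (F : Finset (Fin n)) :
    Ideal.comap
      ((algebraMap (MvPolynomial (Fin n) K)
          (Localization.Away (∏ i ∈ F, (X i : MvPolynomial (Fin n) K)))).comp
        (rename (Subtype.val : {i : Fin n // i ∉ F} → Fin n)).toRingHom)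
      (Ideal.map
        (algebraMap (MvPolynomial (Fin n) K)
          (Localization.Away (∏ i ∈ F, (X i : MvPolynomial (Fin n) K))))
        (coverIdeal K E)) = coverIdealRestr K E F := by
  set f : MvPolynomial (Fin n) K := ∏ i ∈ F, X i with hf
  have hf0 : f ≠ 0 := Finset.prod_ne_zero_iff.mpr fun i _ => X_ne_zero i
  have hinj : Function.Injective (algebraMap (MvPolynomial (Fin n) K) (Localization.Away f)) :=
    IsLocalization.injective _ (powers_le_nonZeroDivisors_of_noZeroDivisors hf0)
  have hvalinj : Function.Injective (Subtype.val : {i : Fin n // i ∉ F} → Fin n) :=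
    Subtype.val_injective
  -- the exponent of the monomial f
  set u : Fin n →₀ ℕ := ∑ i ∈ F, Finsupp.single i 1 with hu
  have hfu : f = monomial u 1 := prod_X_eq_monomial_sum F
  have hui : ∀ i : Fin n, u i = if i ∈ F then 1 else 0 := by
    intro i
    classical
    simp [hu, Finsupp.finset_sum_apply, Finsupp.single_apply]
  ext q
  rw [Ideal.mem_comap, RingHom.comp_apply]
  rw [IsLocalization.mem_map_algebraMap_iff (Submonoid.powers f) (Localization.Away f)]
  rw [coverIdealRestr_mem_iff]
  constructor
  · rintro ⟨⟨⟨a, haI⟩, s⟩, hs⟩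
    obtain ⟨m, hm⟩ := s.2
    have hsm : (s : MvPolynomial (Fin n) K) = f ^ m := hm.symm
    rw [← map_mul] at hs
    have hin : (rename (Subtype.val : {i : Fin n // i ∉ F} → Fin n) q) * s ∈ coverIdeal K E :=
      hinj hs ▸ haI
    rw [coverIdeal_mem_iff] at hin
    intro e he hdisj c hc
    -- consider the monomial m • u + mapDomain val c
    have hd : (m • u + Finsupp.mapDomain Subtype.val c) ∈
        ((rename (Subtype.val : {i : Fin n // i ∉ F} → Fin n) q) * s).support := by
      rw [mem_support_iff, hsm, hfu, monomial_pow, one_pow, mul_comm,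
        coeff_monomial_mul, one_mul, coeff_rename_mapDomain _ hvalinj]
      exact mem_support_iff.1 hc
    obtain ⟨i, hie, hine⟩ := hin e he _ hd
    have hiF : i ∉ F := hdisj i hie
    refine ⟨⟨i, hiF⟩, hie, fun h0 => hine ?_⟩
    have h1 : (m • u + Finsupp.mapDomain Subtype.val c) i
        = m * u i + Finsupp.mapDomain Subtype.val c i := by
      rw [Finsupp.add_apply, Finsupp.smul_apply, smul_eq_mul]
    rw [h1, hui, if_neg hiF, mul_zero, zero_add,
      show Finsupp.mapDomain Subtype.val c i = c ⟨i, hiF⟩ from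
        Finsupp.mapDomain_apply hvalinj c ⟨i, hiF⟩, h0]
  · intro h
    refine ⟨⟨⟨(rename (Subtype.val : {i : Fin n // i ∉ F} → Fin n) q) * f, ?_⟩,
      ⟨f, ⟨1, pow_one f⟩⟩⟩, by simp [map_mul]⟩
    rw [coverIdeal_mem_iff]
    intro e he d hd
    rw [mem_support_iff, mul_comm, hfu, coeff_monomial_mul'] at hd
    by_cases hle : u ≤ d
    · rw [if_pos hle, one_mul] at hd
      by_cases hcase : ∀ i ∈ e, i ∉ F
      · obtain ⟨c, hmap, hcne⟩ := coeff_rename_ne_zero _ _ _ hd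
        obtain ⟨j, hje, hjne⟩ := h e he hcase c (mem_support_iff.2 hcne)
        refine ⟨j, hje, ?_⟩
        have h1 : (d - u) ↑j = c j := by
          rw [← hmap]; exact Finsupp.mapDomain_apply hvalinj c j
        have h2 : (d - u) ↑j = d ↑j - u ↑j := Finsupp.tsub_apply d u ↑j
        intro h0
        rw [h0] at h2
        omega
      · push_neg at hcase
        obtain ⟨i, hie, hiF⟩ := hcase
        refine ⟨i, hie, ?_⟩
        have := hle i
        rw [hui, if_pos hiF] at this
        omega
    · rw [if_neg hle] at hd
      exact absurd rfl hd
end
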